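/- arXiv:2005.14680 — 2 statements merged into one kernel-verified Lean document; each statement's English description precedes it below -/
import Mathlib

section
/- Let 1 ≤ k ≤ n and let φ ∈ C^∞(S^n) be positive, satisfy ∫_{S^n} u φ(u) dω(u) = 0 and the strict convexity condition, and let K_t, t ∈ [0,T), be a solution of the Christoffel–Minkowski flow starting from a smooth strictly convex body K_0. If for some t_0 ∈ [0,T), δ > 0 and x_0 ∈ ℝ^{n+1} the closed ball of radius 4δ about x_0 is contained in K_{t_0}, then there exists a constant c_δ > 0, depending only on δ, K_0 and φ, such that the closed ball of radius 2δ about x_0 is contained in K_t for all t ∈ [t_0, min(t_0 + c_δ, T)). -/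
open MeasureTheory Set Finset Filter
open scoped RealInnerProductSpace Topology NNReal

noncomputable section

/-- Euclidean space `ℝ^{n+1}`. -/
abbrev Euc (n : ℕ) : Type := EuclideanSpace ℝ (Fin (n + 1))

/-- The standard round measure `dω` on the unit sphere `S^n ⊆ ℝ^{n+1}`,
realized as the `n`-dimensional Hausdorff measure restricted to the sphere. -/
def sphMeas (n : ℕ) : Measure (Euc n) :=
  (μH[(n : ℝ)] : Measure (Euc n)).restrict (Metric.sphere (0 : Euc n) 1)

/-- The support function of a set `K`. -/
def supp (n : ℕ) (K : Set (Euc n)) (x : Euc n) : ℝ :=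
  sSup ((fun y => ⟪x, y⟫) '' K)

/-- The Hessian of `f` at `u`, as a bilinear expression. -/
def hess (n : ℕ) (f : Euc n → ℝ) (u v w : Euc n) : ℝ :=
  iteratedFDeriv ℝ 2 f u ![v, w]

/-- The positively 1-homogeneous extension of the restriction of `ψ` to the unit sphere. -/
def homExt (n : ℕ) (ψ : Euc n → ℝ) (x : Euc n) : ℝ :=
  ‖x‖ * ψ (‖x‖⁻¹ • x)

/-- The `k`-th elementary symmetric polynomial `p_k` of `lam : Fin n → ℝ`. -/
def pElem (n k : ℕ) (lam : Fin n → ℝ) : ℝ :=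
  ∑ S ∈ Finset.univ.powersetCard k, ∏ i ∈ S, lam i

/-- `x ↦ x^{-1/k}` (real power). -/
def invRoot (k : ℕ) (x : ℝ) : ℝ := x ^ (-(1 : ℝ) / (k : ℝ))

/-- `K` is a smooth, strictly convex body: a compact convex set with nonempty interior
whose support function is smooth away from the origin and whose Hessian at every unit
vector `u` is positive definite on the hyperplane `u^⊥`. -/
structure IsSSCBody (n : ℕ) (K : Set (Euc n)) : Prop where
  isCompact : IsCompact K
  convex : Convex ℝ K
  nonempty_interior : (interior K).Nonempty
  smooth : ContDiffOn ℝ (⊤ : ℕ∞) (supp n K) {(0 : Euc n)}ᶜ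
  posDef : ∀ u : Euc n, ‖u‖ = 1 → ∀ v : Euc n, ⟪u, v⟫ = 0 → v ≠ 0 →
    0 < hess n (supp n K) u v v

/-- `lam` lists the eigenvalues of the Hessian of `f` at `u` restricted to `u^⊥`
(for `f` a support function: the principal radii of curvature at the point with
outer normal `u`), witnessed by an orthonormal eigenbasis of `u^⊥`. -/
def IsRadii (n : ℕ) (f : Euc n → ℝ) (u : Euc n) (lam : Fin n → ℝ) : Prop :=
  ∃ e : Fin n → Euc n, Orthonormal ℝ e ∧ (∀ i, ⟪u, e i⟫ = 0) ∧
    ∀ i, ∀ w : Euc n, ⟪u, w⟫ = 0 → hess n f u (e i) w = lam i * ⟪e i, w⟫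

/-- `φ ∈ C^∞(S^n)` is positive: its 1-homogeneous extension is smooth away from the
origin, and `φ > 0` on the sphere. -/
def SmoothPos (n : ℕ) (φ : Euc n → ℝ) : Prop :=
  ContDiffOn ℝ (⊤ : ℕ∞) (homExt n φ) {(0 : Euc n)}ᶜ ∧ ∀ u : Euc n, ‖u‖ = 1 → 0 < φ u

/-- The balancing condition `∫_{S^n} u φ(u) dω(u) = 0`. -/
def BalancedCond (n : ℕ) (φ : Euc n → ℝ) : Prop :=
  (∫ u, φ u • u ∂(sphMeas n)) = 0

/-- The strict convexity condition on `φ`: the positively 1-homogeneous extension of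
`φ^{-1/k}` is smooth away from the origin and its Hessian at every `u ∈ S^n` is
positive definite on `u^⊥`. -/
def StrictConv (n k : ℕ) (φ : Euc n → ℝ) : Prop :=
  ContDiffOn ℝ (⊤ : ℕ∞) (homExt n fun u => invRoot k (φ u)) {(0 : Euc n)}ᶜ ∧
  ∀ u : Euc n, ‖u‖ = 1 → ∀ v : Euc n, ⟪u, v⟫ = 0 → v ≠ 0 →
    0 < hess n (homExt n fun u => invRoot k (φ u)) u v v

/-- The global term `μ` of the Christoffel–Minkowski flow, for prescribed data `φ`
and curvature data `pk = p_k(λ(·))`. -/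
def cmGlobal (n k : ℕ) (φ pk : Euc n → ℝ) : ℝ :=
  (∫ u, pk u ^ (((k : ℝ) - 1) / (k : ℝ)) ∂(sphMeas n)) /
  (∫ u, invRoot k (φ u) * pk u ∂(sphMeas n))

/-- A solution of the Christoffel–Minkowski flow on the time interval `I`:
a family of smooth strictly convex bodies `K t` whose support functions depend smoothly
on `(t, u)`, together with their principal radii of curvature `lam t u`, satisfying
`∂_t s(t,u) = μ(t) φ(u)^{-1/k} - p_k(t,u)^{-1/k}`. -/
structure CMFlow (n k : ℕ) (φ : Euc n → ℝ) (I : Set ℝ) where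
  K : ℝ → Set (Euc n)
  lam : ℝ → Euc n → Fin n → ℝ
  body : ∀ t ∈ I, IsSSCBody n (K t)
  radii : ∀ t ∈ I, ∀ u : Euc n, ‖u‖ = 1 → IsRadii n (supp n (K t)) u (lam t u)
  smooth : ContDiffOn ℝ (⊤ : ℕ∞) (fun p : ℝ × Euc n => supp n (K p.1) p.2)
    (I ×ˢ ({(0 : Euc n)}ᶜ))
  evol : ∀ t ∈ I, ∀ u : Euc n, ‖u‖ = 1 →
    HasDerivWithinAt (fun τ => supp n (K τ) u)
      (cmGlobal n k φ (fun w => pElem n k (lam t w)) * invRoot k (φ u)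
        - invRoot k (pElem n k (lam t u))) I t

/-- The centroid of a convex body. -/
def centroid (n : ℕ) (K : Set (Euc n)) : Euc n :=
  ((volume K).toReal)⁻¹ • ∫ x in K, x

end

noncomputable section


open scoped Pointwise

section AuxLemmas

lemma inner_le_supp {n : ℕ} {K : Set (Euc n)} (hK : IsCompact K) {y : Euc n}
    (hy : y ∈ K) (x : Euc n) : ⟪x, y⟫ ≤ supp n K x :=
  le_csSup ((hK.image (continuous_const.inner continuous_id)).bddAbove)
    (Set.mem_image_of_mem _ hy)

lemma supp_le {n : ℕ} {K : Set (Euc n)} (hne : K.Nonempty) {x : Euc n} {M : ℝ}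
    (h : ∀ y ∈ K, ⟪x, y⟫ ≤ M) : supp n K x ≤ M :=
  csSup_le (hne.image _) (by rintro z ⟨y, hy, rfl⟩; exact h y hy)

lemma supp_smul {n : ℕ} {K : Set (Euc n)}
    {c : ℝ} (hc : 0 ≤ c) (x : Euc n) : supp n K (c • x) = c * supp n K x := by
  have himg : (fun y => ⟪c • x, y⟫) '' K = c • ((fun y => ⟪x, y⟫) '' K) := by
    ext z
    simp only [Set.mem_image, Set.mem_smul_set, real_inner_smul_left]
    constructor
    · rintro ⟨y, hy, rfl⟩; exact ⟨⟪x, y⟫, ⟨y, hy, rfl⟩, rfl⟩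
    · rintro ⟨w, ⟨y, hy, rfl⟩, rfl⟩; exact ⟨y, hy, rfl⟩
  rw [supp, himg, Real.sSup_smul_of_nonneg hc, smul_eq_mul, supp]

lemma supp_ge_ball {n : ℕ} {K : Set (Euc n)} (hK : IsCompact K) {x₀ : Euc n} {ρ : ℝ}
    (hρ : 0 ≤ ρ) (hball : Metric.closedBall x₀ ρ ⊆ K) {u : Euc n} (hu : ‖u‖ = 1) :
    ⟪u, x₀⟫ + ρ ≤ supp n K u := by
  have hy : x₀ + ρ • u ∈ K := by
    apply hball
    simp [Metric.mem_closedBall, dist_eq_norm, norm_smul, hu, abs_of_nonneg hρ]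
  have := inner_le_supp hK hy u
  rw [inner_add_right, real_inner_smul_right, real_inner_self_eq_norm_sq, hu] at this
  linarith

lemma ball_subset_of_supp {n : ℕ} {K : Set (Euc n)} (hK : IsCompact K)
    (hconv : Convex ℝ K) (hne : K.Nonempty) {x₀ : Euc n} {ρ : ℝ}
    (h : ∀ u : Euc n, ‖u‖ = 1 → ⟪u, x₀⟫ + ρ ≤ supp n K u) :
    Metric.closedBall x₀ ρ ⊆ K := by
  intro y hy
  by_contra hyK
  obtain ⟨f, M, hfK, hfy⟩ := geometric_hahn_banach_closed_point hconv hK.isClosed hyK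
  set v := (InnerProductSpace.toDual ℝ (Euc n)).symm f with hv
  have hfv : ∀ z, ⟪v, z⟫ = f z := fun z => InnerProductSpace.toDual_symm_apply
  have hvne : v ≠ 0 := by
    intro hv0
    obtain ⟨a, ha⟩ := hne
    have h1 : f a < M := hfK a ha
    have h2 : M < f y := hfy
    have e1 : f a = 0 := by rw [← hfv a, hv0]; simp
    have e2 : f y = 0 := by rw [← hfv y, hv0]; simp
    linarith
  have hvpos : 0 < ‖v‖ := norm_pos_iff.mpr hvne
  set w : Euc n := ‖v‖⁻¹ • v with hw
  have hwu : ‖w‖ = 1 := norm_smul_inv_norm hvne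
  have h1 : supp n K w ≤ ‖v‖⁻¹ * M := by
    apply supp_le hne
    intro z hz
    rw [hw, real_inner_smul_left, hfv]
    exact mul_le_mul_of_nonneg_left (hfK z hz).le (by positivity)
  have h2 : ⟪w, y⟫ = ‖v‖⁻¹ * f y := by rw [hw, real_inner_smul_left, hfv]
  have h3 : ⟪w, y⟫ ≤ ⟪w, x₀⟫ + ρ := by
    have hsub : ⟪w, y - x₀⟫ ≤ ρ := by
      calc ⟪w, y - x₀⟫ ≤ ‖w‖ * ‖y - x₀‖ := real_inner_le_norm _ _
        _ ≤ 1 * ρ := by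
            rw [hwu]
            exact mul_le_mul_of_nonneg_left
              (by rwa [← dist_eq_norm, ← Metric.mem_closedBall]) zero_le_one
        _ = ρ := one_mul ρ
    have := inner_sub_right (𝕜 := ℝ) w y x₀
    linarith [this]
  have h4 : ‖v‖⁻¹ * M < ‖v‖⁻¹ * f y := mul_lt_mul_of_pos_left hfy (by positivity)
  linarith [h w hwu, h1, h2 ▸ h3, h3]

lemma secondDerivTest {f f' : ℝ → ℝ} {c ε : ℝ} (hε : 0 < ε)
    (hd : ∀ s ∈ Set.Ioo (-ε) ε, HasDerivAt f (f' s) s)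
    (hd2 : HasDerivAt f' c 0) (h0 : f 0 = 0)
    (hnn : ∀ s ∈ Set.Ioo (-ε) ε, 0 ≤ f s) : 0 ≤ c := by
  have hmem0 : (0:ℝ) ∈ Set.Ioo (-ε) ε := ⟨by linarith, hε⟩
  have hIoo : Set.Ioo (-ε) ε ∈ 𝓝 (0:ℝ) := isOpen_Ioo.mem_nhds hmem0
  have hmin : IsLocalMin f 0 := by
    filter_upwards [hIoo] with s hs
    rw [h0]; exact hnn s hs
  have hf'0 : f' 0 = 0 := hmin.hasDerivAt_eq_zero (hd 0 hmem0)
  by_contra hc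
  push_neg at hc
  have hslope : Tendsto (slope f' 0) (𝓝[≠] (0:ℝ)) (𝓝 c) :=
    hasDerivAt_iff_tendsto_slope.mp hd2
  have hevent : ∀ᶠ s in 𝓝[≠] (0:ℝ), slope f' 0 s < c / 2 :=
    hslope.eventually (Filter.Tendsto.eventually_lt_const (by linarith) tendsto_id)
  rw [eventually_nhdsWithin_iff] at hevent
  obtain ⟨d, hdpos, hd'⟩ := Metric.eventually_nhds_iff.mp hevent
  set ε' : ℝ := min (d/2) (ε/2) with hε'
  have hε'pos : 0 < ε' := lt_min (by linarith) (by linarith)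
  have hε'lt : ε' < ε := lt_of_le_of_lt (min_le_right _ _) (by linarith)
  have hderivneg : ∀ s ∈ Set.Ioo (0:ℝ) ε', f' s < 0 := by
    intro s hs
    have hsd : dist s 0 < d := by
      rw [Real.dist_eq, sub_zero, abs_of_pos hs.1]
      have h1 : s < d/2 := lt_of_lt_of_le hs.2 (min_le_left _ _)
      linarith
    have := hd' hsd (by simp [ne_of_gt hs.1] : s ∈ ({0}ᶜ : Set ℝ))
    rw [slope_def_field, hf'0] at this
    have hq : (f' s - 0) / (s - 0) < c/2 := this
    rw [sub_zero, sub_zero, div_lt_iff₀ hs.1] at hq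
    have : c / 2 * s < 0 := mul_neg_of_neg_of_pos (by linarith) hs.1
    linarith
  have hanti : StrictAntiOn f (Set.Icc 0 ε') := by
    apply strictAntiOn_of_deriv_neg (convex_Icc 0 ε')
    · intro x hx
      have hxI : x ∈ Set.Ioo (-ε) ε := ⟨by nlinarith [hx.1], lt_of_le_of_lt hx.2 hε'lt⟩
      exact (hd x hxI).continuousAt.continuousWithinAt
    · intro x hx
      rw [interior_Icc] at hx
      have hxI : x ∈ Set.Ioo (-ε) ε := ⟨by nlinarith [hx.1], lt_of_lt_of_le hx.2 (by linarith)⟩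
      rw [(hd x hxI).deriv]
      exact hderivneg x hx
  have hlt : f ε' < f 0 :=
    hanti (Set.left_mem_Icc.mpr hε'pos.le) (Set.right_mem_Icc.mpr hε'pos.le) hε'pos
  have hnn' : 0 ≤ f ε' := hnn ε' ⟨by linarith, hε'lt⟩
  rw [h0] at hlt; linarith

/-- Key Hessian comparison at a contact point: if `g − ⟪·,x₀⟫ − r‖·‖` is nonnegative
away from the origin with equality at the unit vector `u`, then the second derivative
of `g` at `u` in any unit direction `v ⊥ u` is at least `r`. -/
lemma hess_ge_of_min {n : ℕ} {g : Euc n → ℝ}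
    (hg : ContDiffOn ℝ (⊤ : ℕ∞) g {(0 : Euc n)}ᶜ)
    {u v : Euc n} (hu : ‖u‖ = 1) (hv : ‖v‖ = 1) (huv : ⟪u, v⟫ = 0)
    {x₀ : Euc n} {r : ℝ}
    (hnn : ∀ x : Euc n, x ≠ 0 → 0 ≤ g x - ⟪x, x₀⟫ - r * ‖x‖)
    (heq : g u - ⟪u, x₀⟫ - r = 0) :
    r ≤ iteratedFDeriv ℝ 2 g u ![v, v] := by
  set L : ℝ → Euc n := fun s => u + s • v with hL
  have hLnorm : ∀ s, ‖L s‖ = Real.sqrt (1 + s ^ 2) := by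
    intro s
    have h2 : ‖L s‖ ^ 2 = 1 + s ^ 2 := by
      rw [hL]
      simp only [norm_add_sq_real, norm_smul, real_inner_smul_right, huv, hu, hv,
        Real.norm_eq_abs, mul_zero]
      rw [mul_pow, sq_abs]
      ring
    rw [← h2, Real.sqrt_sq (norm_nonneg _)]
  have hsqrtpos : ∀ s : ℝ, (0:ℝ) < Real.sqrt (1 + s ^ 2) := by
    intro s; apply Real.sqrt_pos.mpr; positivity
  have hLne : ∀ s, L s ≠ 0 := by
    intro s h0
    have := hLnorm s
    rw [h0, norm_zero] at this
    exact absurd this.symm (ne_of_gt (hsqrtpos s))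
  have hopen : ∀ s : ℝ, {(0:Euc n)}ᶜ ∈ 𝓝 (L s) := fun s =>
    (isOpen_compl_singleton).mem_nhds (hLne s)
  have hgat : ∀ s : ℝ, ContDiffAt ℝ (⊤ : ℕ∞) g (L s) := fun s => hg.contDiffAt (hopen s)
  have hLD : ∀ s : ℝ, HasDerivAt L v s := by
    intro s
    have h1 : HasDerivAt (fun s : ℝ => s • v) ((1:ℝ) • v) s :=
      (hasDerivAt_id s).smul_const v
    simpa only [one_smul] using h1.const_add u
  have hL0 : L 0 = u := by simp [hL]
  have hinner : ∀ s, ⟪L s, x₀⟫ = ⟪u, x₀⟫ + s * ⟪v, x₀⟫ := by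
    intro s; rw [hL]; simp only [inner_add_left, real_inner_smul_left]
  set ψ : ℝ → ℝ := fun s => g (L s) - (⟪u, x₀⟫ + s * ⟪v, x₀⟫) - r * Real.sqrt (1 + s ^ 2)
    with hψ
  set ψ' : ℝ → ℝ := fun s => (fderiv ℝ g (L s)) v - ⟪v, x₀⟫ - r * (s / Real.sqrt (1 + s ^ 2))
    with hψ'
  have hq : ∀ s : ℝ, HasDerivAt (fun s => Real.sqrt (1 + s ^ 2))
      (s / Real.sqrt (1 + s ^ 2)) s := by
    intro s
    have h1 : HasDerivAt (fun s : ℝ => 1 + s ^ 2) (2 * s) s := by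
      simpa using ((hasDerivAt_pow 2 s).const_add 1)
    have h2 := (Real.hasDerivAt_sqrt (by positivity : (1:ℝ) + s ^ 2 ≠ 0)).comp s h1
    convert h2 using 1 <;> try rfl
    field_simp
  have hdψ : ∀ s : ℝ, HasDerivAt ψ (ψ' s) s := by
    intro s
    have hgd : HasDerivAt (fun s => g (L s)) ((fderiv ℝ g (L s)) v) s :=
      ((hgat s).differentiableAt (by simp)).hasFDerivAt.comp_hasDerivAt s (hLD s)
    have hlin : HasDerivAt (fun s : ℝ => ⟪u, x₀⟫ + s * ⟪v, x₀⟫) (⟪v, x₀⟫) s := by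
      simpa using ((hasDerivAt_id s).mul_const ⟪v, x₀⟫).const_add ⟪u, x₀⟫
    exact (hgd.sub hlin).sub ((hq s).const_mul r)
  have hfd2 : DifferentiableAt ℝ (fderiv ℝ g) u := by
    have h1 : ContDiffAt ℝ 1 (fderiv ℝ g) u := by
      have h0 := hgat 0; rw [hL0] at h0
      exact h0.fderiv_right (WithTop.coe_le_coe.mpr le_top)
    exact h1.differentiableAt one_ne_zero
  have hA : HasDerivAt (fun s => (fderiv ℝ g (L s)) v)
      ((fderiv ℝ (fderiv ℝ g) u v) v) 0 := by
    have h1 : HasDerivAt (fun s => fderiv ℝ g (L s)) (fderiv ℝ (fderiv ℝ g) u v) 0 := by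
      have hfd2' : HasFDerivAt (fderiv ℝ g) (fderiv ℝ (fderiv ℝ g) u) (L 0) := by
        rw [hL0]; exact hfd2.hasFDerivAt
      exact hfd2'.comp_hasDerivAt 0 (hLD 0)
    simpa using h1.clm_apply (hasDerivAt_const 0 v)
  have hB : HasDerivAt (fun s : ℝ => s / Real.sqrt (1 + s ^ 2)) 1 0 := by
    have hw : HasDerivAt (fun s : ℝ => (Real.sqrt (1 + s ^ 2))⁻¹) 0 0 := by
      have h0 : HasDerivAt (fun s : ℝ => Real.sqrt (1 + s ^ 2)) 0 0 := by
        simpa using hq 0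
      have := h0.inv (by simpa using (ne_of_gt (hsqrtpos 0)))
      simp at this; exact this
    have hmul := (hasDerivAt_id (0:ℝ)).mul hw
    have h01 : (Real.sqrt (1 + (0:ℝ) ^ 2))⁻¹ = 1 := by norm_num
    simp only [id_eq, mul_zero, one_mul, zero_mul, add_zero, h01] at hmul
    simp only [div_eq_mul_inv]; exact hmul
  have hdψ' : HasDerivAt ψ' ((fderiv ℝ (fderiv ℝ g) u v) v - r) 0 := by
    have := (hA.sub (hasDerivAt_const 0 ⟪v, x₀⟫)).sub (hB.const_mul r)
    simp at this; exact this
  have hψnn : ∀ s ∈ Set.Ioo (-1:ℝ) 1, 0 ≤ ψ s := by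
    intro s _
    have := hnn (L s) (hLne s)
    rwa [hinner s, hLnorm s] at this
  have hψ0 : ψ 0 = 0 := by
    have h01 : Real.sqrt (1 + (0:ℝ) ^ 2) = 1 := by norm_num
    simp only [hψ, hL0, h01, mul_zero, add_zero, mul_one]
    linarith [heq]
  have key := secondDerivTest one_pos (fun s _ => hdψ s) hdψ' hψ0 hψnn
  have h2 : iteratedFDeriv ℝ 2 g u ![v, v] = (fderiv ℝ (fderiv ℝ g) u v) v := by
    rw [iteratedFDeriv_two_apply]
    simp
  rw [h2]; linarith

lemma pElem_nonneg {n k : ℕ} {lam : Fin n → ℝ} (h : ∀ i, 0 ≤ lam i) :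
    0 ≤ pElem n k lam :=
  Finset.sum_nonneg fun S _ => Finset.prod_nonneg fun i _ => h i

lemma pElem_ge {n k : ℕ} (hkn : k ≤ n) {lam : Fin n → ℝ} {r : ℝ} (hr : 0 ≤ r)
    (h : ∀ i, r ≤ lam i) : (n.choose k : ℝ) * r ^ k ≤ pElem n k lam := by
  rw [pElem]
  have hstep : ∀ S ∈ Finset.univ.powersetCard k, r ^ k ≤ ∏ i ∈ S, lam i := by
    intro S hS
    have hcard : S.card = k := (Finset.mem_powersetCard.mp hS).2
    calc r ^ k = ∏ _i ∈ S, r := by rw [Finset.prod_const, hcard]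
      _ ≤ ∏ i ∈ S, lam i := Finset.prod_le_prod (fun i _ => hr) (fun i _ => h i)
  calc (n.choose k : ℝ) * r ^ k = ∑ _S ∈ Finset.univ.powersetCard k, r ^ k := by
        rw [Finset.sum_const, Finset.card_powersetCard, Finset.card_univ,
          Fintype.card_fin, nsmul_eq_mul]
    _ ≤ ∑ S ∈ Finset.univ.powersetCard k, ∏ i ∈ S, lam i := Finset.sum_le_sum hstep

lemma invRoot_le_of {k : ℕ} (hk : 1 ≤ k) {C r p : ℝ} (hC : 0 < C) (hr : 0 < r)
    (hp : C * r ^ k ≤ p) : invRoot k p ≤ invRoot k C / r := by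
  have hk0 : (k : ℝ) ≠ 0 := Nat.cast_ne_zero.mpr (by omega)
  have hCr : 0 < C * r ^ k := by positivity
  have h1 : invRoot k p ≤ invRoot k (C * r ^ k) :=
    Real.rpow_le_rpow_of_nonpos hCr hp
      (div_nonpos_of_nonpos_of_nonneg (by norm_num) (Nat.cast_nonneg k))
  have h2 : invRoot k (C * r ^ k) = invRoot k C / r := by
    rw [invRoot, invRoot, Real.mul_rpow hC.le (by positivity)]
    rw [← Real.rpow_natCast r k, ← Real.rpow_mul hr.le]
    rw [show (k : ℝ) * (-(1:ℝ) / (k:ℝ)) = -1 by field_simp]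
    rw [Real.rpow_neg_one]
    exact (div_eq_mul_inv _ _).symm
  linarith

lemma integral_sphMeas_nonneg {n : ℕ} {f : Euc n → ℝ}
    (h : ∀ w : Euc n, ‖w‖ = 1 → 0 ≤ f w) : 0 ≤ ∫ u, f u ∂(sphMeas n) := by
  rw [sphMeas]
  exact setIntegral_nonneg Metric.isClosed_sphere.measurableSet
    fun w hw => h w (mem_sphere_zero_iff_norm.mp hw)

lemma cmGlobal_nonneg {n k : ℕ} {φ pk : Euc n → ℝ}
    (hpk : ∀ w : Euc n, ‖w‖ = 1 → 0 ≤ pk w)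
    (hφ : ∀ w : Euc n, ‖w‖ = 1 → 0 < φ w) : 0 ≤ cmGlobal n k φ pk := by
  apply div_nonneg
  · exact integral_sphMeas_nonneg fun w hw => Real.rpow_nonneg (hpk w hw) _
  · exact integral_sphMeas_nonneg fun w hw =>
      mul_nonneg (Real.rpow_nonneg (hφ w hw).le _) (hpk w hw)

lemma lam_pos {n : ℕ} {K : Set (Euc n)} (hbody : IsSSCBody n K) {u : Euc n}
    (hu : ‖u‖ = 1) {lam : Fin n → ℝ} (hrad : IsRadii n (supp n K) u lam) :
    ∀ i, 0 < lam i := by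
  obtain ⟨e, honb, heu, heig⟩ := hrad
  intro i
  have hei : ‖e i‖ = 1 := honb.1 i
  have hne : e i ≠ 0 := by
    intro h0; rw [h0, norm_zero] at hei; norm_num at hei
  have hpd := hbody.posDef u hu (e i) (heu i) hne
  have h3 := heig i (e i) (heu i)
  have h4 : ⟪e i, e i⟫ = 1 := by
    rw [real_inner_self_eq_norm_sq, hei]; norm_num
  rw [h3, h4, mul_one] at hpd
  exact hpd

end AuxLemmas

set_option maxHeartbeats 1000000 in
/-- Lemma 5.1: along the Christoffel–Minkowski flow starting from a
smooth strictly convex body `K₀`, if the closed ball `B̄(x₀, 4δ)` is contained in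
`K_{t₀}` for some time `t₀ ∈ [0,T)`, then there is `c_δ > 0`, depending only on `δ`,
`K₀` and `φ`, such that `B̄(x₀, 2δ) ⊆ K_t` for all `t ∈ [t₀, min(t₀ + c_δ, T))`. -/
theorem stmt9 (n k : ℕ) (hk1 : 1 ≤ k) (hkn : k ≤ n) (φ : Euc n → ℝ)
    (hφ : SmoothPos n φ) (hbal : BalancedCond n φ) (hsc : StrictConv n k φ)
    (K₀ : Set (Euc n)) (hK₀ : IsSSCBody n K₀) :
    ∀ δ : ℝ, 0 < δ → ∃ c : ℝ, 0 < c ∧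
      ∀ T : ℝ, ∀ F : CMFlow n k φ (Set.Ico 0 T), F.K 0 = K₀ →
        ∀ t₀ ∈ Set.Ico (0 : ℝ) T, ∀ x₀ : Euc n,
          Metric.closedBall x₀ (4 * δ) ⊆ F.K t₀ →
          ∀ t ∈ Set.Ico t₀ (min (t₀ + c) T),
            Metric.closedBall x₀ (2 * δ) ⊆ F.K t := by
  intro δ hδ
  have hCpos : (0:ℝ) < (n.choose k : ℝ) := by
    exact_mod_cast Nat.choose_pos hkn
  set b : ℝ := invRoot k (n.choose k : ℝ) / δ with hbdef
  have hinvC : 0 < invRoot k (n.choose k : ℝ) := Real.rpow_pos_of_pos hCpos _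
  have hbpos : 0 < b := div_pos hinvC hδ
  refine ⟨δ / b, div_pos hδ hbpos, ?_⟩
  intro T F hF0 t₀ ht₀ x₀ hball t ht
  have hδc : b * (δ / b) = δ := by field_simp
  obtain ⟨ht0T, ht0T'⟩ := ht₀
  obtain ⟨htt0, htlt⟩ := ht
  have htltT : t < T := lt_of_lt_of_le htlt (min_le_right _ _)
  have htltc : t < t₀ + δ / b := lt_of_lt_of_le htlt (min_le_left _ _)
  set r : ℝ → ℝ := fun τ => 3*δ - b*(τ - t₀) with hrdef
  set g : ℝ → Euc n → ℝ := fun τ u => supp n (F.K τ) u - ⟪u, x₀⟫ - r τ with hgdef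
  have hmemI : ∀ τ, t₀ ≤ τ → τ ≤ t → τ ∈ Set.Ico (0:ℝ) T := fun τ h1 h2 =>
    ⟨le_trans ht0T h1, lt_of_le_of_lt h2 htltT⟩
  -- initial bound
  have hinit : ∀ u : Euc n, ‖u‖ = 1 → δ ≤ g t₀ u := by
    intro u hu
    have hcompact := (F.body t₀ ⟨ht0T, ht0T'⟩).isCompact
    have h4 := supp_ge_ball hcompact (by positivity) hball hu
    simp only [hgdef, hrdef]
    have : ⟪u, x₀⟫ = ⟪u, x₀⟫ := rfl
    nlinarith [h4]
  -- main claim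
  have hclaim : ∀ τ ∈ Set.Icc t₀ t, ∀ u : Euc n, ‖u‖ = 1 → 0 < g τ u := by
    by_contra hcon
    push_neg at hcon
    obtain ⟨τb, hτb, ub, hub, hgb⟩ := hcon
    set P : Set (ℝ × Euc n) := Set.Icc t₀ t ×ˢ Metric.sphere (0:Euc n) 1 with hP
    set A : Set (ℝ × Euc n) := P ∩ (fun p : ℝ × Euc n => g p.1 p.2) ⁻¹' (Set.Iic 0) with hA
    have hPsub : P ⊆ (Set.Ico 0 T) ×ˢ ({(0:Euc n)}ᶜ) := by
      rintro ⟨τ, u⟩ ⟨h1, h2⟩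
      refine ⟨hmemI τ h1.1 h1.2, ?_⟩
      have hn1 : ‖u‖ = 1 := mem_sphere_zero_iff_norm.mp h2
      simp only [Set.mem_compl_iff, Set.mem_singleton_iff]
      intro h0; rw [h0, norm_zero] at hn1; norm_num at hn1
    have hgcont : ContinuousOn (fun p : ℝ × Euc n => g p.1 p.2) P := by
      have h1 : ContinuousOn (fun p : ℝ × Euc n => supp n (F.K p.1) p.2) P :=
        (F.smooth.continuousOn).mono hPsub
      have h2 : Continuous (fun p : ℝ × Euc n => ⟪p.2, x₀⟫) :=
        continuous_snd.inner continuous_const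
      have h3 : Continuous (fun p : ℝ × Euc n => 3*δ - b*(p.1 - t₀)) :=
        continuous_const.sub (continuous_const.mul (continuous_fst.sub continuous_const))
      simp only [hgdef, hrdef]
      exact (h1.sub h2.continuousOn).sub h3.continuousOn
    have hPcl : IsClosed P := isClosed_Icc.prod Metric.isClosed_sphere
    have hAcl : IsClosed A := hgcont.preimage_isClosed_of_isClosed hPcl isClosed_Iic
    have hPcomp : IsCompact P := isCompact_Icc.prod (isCompact_sphere 0 1)
    have hAcomp : IsCompact A := hPcomp.of_isClosed_subset hAcl Set.inter_subset_left
    have hAne : A.Nonempty :=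
      ⟨(τb, ub), ⟨⟨hτb, mem_sphere_zero_iff_norm.mpr hub⟩, hgb⟩⟩
    have hBcomp : IsCompact (Prod.fst '' A) := hAcomp.image continuous_fst
    have hBne : (Prod.fst '' A).Nonempty := hAne.image _
    have ht₁B : sInf (Prod.fst '' A) ∈ Prod.fst '' A := hBcomp.sInf_mem hBne
    obtain ⟨⟨t₁, u₁⟩, hmemA, heq1⟩ := ht₁B
    have ht₁Icc : t₁ ∈ Set.Icc t₀ t := hmemA.1.1
    have hu₁norm : ‖u₁‖ = 1 := mem_sphere_zero_iff_norm.mp hmemA.1.2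
    have hg₁ : g t₁ u₁ ≤ 0 := hmemA.2
    -- before t₁ everything is positive
    have hbefore : ∀ τ ∈ Set.Ico t₀ t₁, ∀ u : Euc n, ‖u‖ = 1 → 0 < g τ u := by
      intro τ hτ u hu
      by_contra hle
      push_neg at hle
      have hmem : (τ, u) ∈ A :=
        ⟨⟨⟨hτ.1, le_trans hτ.2.le ht₁Icc.2⟩, mem_sphere_zero_iff_norm.mpr hu⟩, hle⟩
      have : sInf (Prod.fst '' A) ≤ τ := csInf_le hBcomp.bddBelow ⟨(τ, u), hmem, rfl⟩
      rw [← heq1] at this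
      exact absurd this (not_le.mpr hτ.2)
    have ht₀lt : t₀ < t₁ := by
      rcases eq_or_lt_of_le ht₁Icc.1 with h | h
      · exfalso
        have := hinit u₁ hu₁norm
        rw [h] at this
        linarith
      · exact h
    -- continuity in time
    have hcont : ∀ u : Euc n, ‖u‖ = 1 → ContinuousOn (fun τ => g τ u) (Set.Icc t₀ t) := by
      intro u hu
      have hune : u ≠ 0 := by
        intro h0; rw [h0, norm_zero] at hu; norm_num at hu
      have hmap : Set.MapsTo (fun τ => (τ, u)) (Set.Icc t₀ t)
          ((Set.Ico 0 T) ×ˢ ({(0:Euc n)}ᶜ)) := fun τ hτ =>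
        ⟨hmemI τ hτ.1 hτ.2, hune⟩
      have h0 : ContinuousOn ((fun p : ℝ × Euc n => supp n (F.K p.1) p.2) ∘
          (fun τ : ℝ => (τ, u))) (Set.Icc t₀ t) :=
        ContinuousOn.comp F.smooth.continuousOn
          (Continuous.continuousOn (continuous_id.prodMk continuous_const)) hmap
      have h1 : ContinuousOn (fun τ => supp n (F.K τ) u) (Set.Icc t₀ t) := h0
      simp only [hgdef, hrdef]
      exact (h1.sub continuousOn_const).sub
        (continuous_const.sub
          (continuous_const.mul (continuous_id.sub continuous_const))).continuousOn
    have hneBot : (𝓝[Set.Ico t₀ t₁] t₁).NeBot := by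
      rw [← mem_closure_iff_nhdsWithin_neBot, closure_Ico (ne_of_lt ht₀lt)]
      exact ⟨ht₀lt.le, le_refl t₁⟩
    have h_at_t₁ : ∀ u : Euc n, ‖u‖ = 1 → 0 ≤ g t₁ u := by
      intro u hu
      have hsub' : Set.Ico t₀ t₁ ⊆ Set.Icc t₀ t := fun τ hτ =>
        ⟨hτ.1, le_trans hτ.2.le ht₁Icc.2⟩
      have htend : Tendsto (fun τ => g τ u) (𝓝[Set.Ico t₀ t₁] t₁) (𝓝 (g t₁ u)) :=
        ((hcont u hu).continuousWithinAt ht₁Icc).mono hsub'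
      exact ge_of_tendsto htend
        (eventually_of_mem self_mem_nhdsWithin fun τ hτ => (hbefore τ hτ u hu).le)
    have hg₁0 : g t₁ u₁ = 0 := le_antisymm hg₁ (h_at_t₁ u₁ hu₁norm)
    have ht₁memI : t₁ ∈ Set.Ico (0:ℝ) T := hmemI t₁ ht₁Icc.1 ht₁Icc.2
    have hr₁gt : 2*δ < r t₁ := by
      have h1 : t₁ - t₀ < δ / b := by linarith [ht₁Icc.2]
      have h2 : b * (t₁ - t₀) < δ := by
        calc b * (t₁ - t₀) < b * (δ / b) := mul_lt_mul_of_pos_left h1 hbpos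
          _ = δ := hδc
      simp only [hrdef]; linarith
    have hr₁pos : 0 < r t₁ := by linarith
    -- min property
    have hminprop : ∀ x : Euc n, x ≠ 0 →
        0 ≤ supp n (F.K t₁) x - ⟪x, x₀⟫ - (r t₁) * ‖x‖ := by
      intro x hx
      have hnx : 0 < ‖x‖ := norm_pos_iff.mpr hx
      have hun : ‖(‖x‖⁻¹ • x : Euc n)‖ = 1 := norm_smul_inv_norm hx
      have hxu : x = ‖x‖ • (‖x‖⁻¹ • x : Euc n) := by
        rw [smul_smul, mul_inv_cancel₀ (ne_of_gt hnx), one_smul]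
      have h1 : supp n (F.K t₁) x = ‖x‖ * supp n (F.K t₁) (‖x‖⁻¹ • x) := by
        conv_lhs => rw [hxu]
        exact supp_smul (norm_nonneg x) _
      have h2 : ⟪x, x₀⟫ = ‖x‖ * ⟪(‖x‖⁻¹ • x : Euc n), x₀⟫ := by
        conv_lhs => rw [hxu]
        exact real_inner_smul_left _ _ _
      have h3 := h_at_t₁ _ hun
      simp only [hgdef] at h3
      rw [h1, h2]
      nlinarith [mul_nonneg hnx.le h3]
    -- eigenvalue bound
    obtain ⟨e, honb, heu, heig⟩ := F.radii t₁ ht₁memI u₁ hu₁norm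
    have hlam_ge : ∀ i, r t₁ ≤ F.lam t₁ u₁ i := by
      intro i
      have hei : ‖e i‖ = 1 := honb.1 i
      have heqc : supp n (F.K t₁) u₁ - ⟪u₁, x₀⟫ - r t₁ = 0 := by
        simp only [hgdef] at hg₁0; linarith [hg₁0]
      have h2 := hess_ge_of_min (F.body t₁ ht₁memI).smooth hu₁norm hei (heu i)
        hminprop heqc
      have h3 := heig i (e i) (heu i)
      have h4 : ⟪e i, e i⟫ = 1 := by
        rw [real_inner_self_eq_norm_sq, hei]; norm_num
      rw [hess, h4, mul_one] at h3
      rw [h3] at h2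
      exact h2
    have hpk_ge : (n.choose k : ℝ) * (r t₁) ^ k ≤ pElem n k (F.lam t₁ u₁) :=
      pElem_ge hkn hr₁pos.le hlam_ge
    have hinv_le : invRoot k (pElem n k (F.lam t₁ u₁)) ≤
        invRoot k (n.choose k : ℝ) / r t₁ :=
      invRoot_le_of hk1 hCpos hr₁pos hpk_ge
    have hinv_le2 : invRoot k (n.choose k : ℝ) / r t₁ ≤ b / 2 := by
      have h2δ : (0:ℝ) < 2*δ := by linarith
      have h1 : invRoot k (n.choose k : ℝ) / r t₁ ≤ invRoot k (n.choose k : ℝ) / (2*δ) :=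
        div_le_div_of_nonneg_left hinvC.le h2δ hr₁gt.le
      have h2 : invRoot k (n.choose k : ℝ) / (2*δ) = b / 2 := by
        rw [hbdef, div_div, mul_comm]
      linarith
    -- μ ≥ 0
    have hμ : 0 ≤ cmGlobal n k φ (fun w => pElem n k (F.lam t₁ w)) := by
      apply cmGlobal_nonneg _ hφ.2
      intro w hw
      exact pElem_nonneg fun i =>
        (lam_pos (F.body t₁ ht₁memI) hw (F.radii t₁ ht₁memI w hw) i).le
    -- evolution equation
    have hev := F.evol t₁ ht₁memI u₁ hu₁norm
    have hD₀ : b/2 ≤ (cmGlobal n k φ (fun w => pElem n k (F.lam t₁ w)) *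
        invRoot k (φ u₁) - invRoot k (pElem n k (F.lam t₁ u₁))) + b := by
      have h1 : 0 ≤ cmGlobal n k φ (fun w => pElem n k (F.lam t₁ w)) *
          invRoot k (φ u₁) :=
        mul_nonneg hμ (Real.rpow_nonneg (hφ.2 u₁ hu₁norm).le _)
      linarith [le_trans hinv_le hinv_le2]
    have hrd : HasDerivWithinAt (fun τ : ℝ => ⟪u₁, x₀⟫ + (3*δ - b*(τ - t₀))) (-b)
        (Set.Ico (0:ℝ) T) t₁ := by
      have h1 : HasDerivAt (fun τ : ℝ => b*(τ - t₀)) b t₁ := by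
        simpa using ((hasDerivAt_id t₁).sub_const t₀).const_mul b
      have h2 : HasDerivAt (fun τ : ℝ => ⟪u₁, x₀⟫ + (3*δ - b*(τ - t₀))) (-b) t₁ := by
        simpa using (h1.const_sub (3*δ)).const_add ⟪u₁, x₀⟫
      exact h2.hasDerivWithinAt
    have hG₁d : HasDerivWithinAt (fun τ => g τ u₁)
        ((cmGlobal n k φ (fun w => pElem n k (F.lam t₁ w)) * invRoot k (φ u₁)
          - invRoot k (pElem n k (F.lam t₁ u₁))) + b) (Set.Ico (0:ℝ) T) t₁ := by
      have h1 := hev.sub hrd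
      have heqf : (fun τ => g τ u₁) =
          (fun τ => supp n (F.K τ) u₁ - (⟪u₁, x₀⟫ + (3*δ - b*(τ - t₀)))) := by
        funext τ; simp only [hgdef, hrdef]; ring
      rw [heqf]
      convert h1 using 1 <;> try rfl
      ring
    have hsub2 : Set.Ico t₀ t₁ ⊆ Set.Ico (0:ℝ) T := fun τ hτ =>
      ⟨le_trans ht0T hτ.1, lt_of_lt_of_le hτ.2 (le_trans ht₁Icc.2 htltT.le)⟩
    have hmono := hG₁d.mono hsub2
    rw [hasDerivWithinAt_iff_tendsto_slope] at hmono
    have hdiffeq : Set.Ico t₀ t₁ \ {t₁} = Set.Ico t₀ t₁ :=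
      Set.diff_singleton_eq_self (fun h => lt_irrefl t₁ h.2)
    rw [hdiffeq] at hmono
    have hle : (cmGlobal n k φ (fun w => pElem n k (F.lam t₁ w)) * invRoot k (φ u₁)
        - invRoot k (pElem n k (F.lam t₁ u₁))) + b ≤ 0 := by
      apply le_of_tendsto hmono
      apply eventually_of_mem self_mem_nhdsWithin
      intro τ hτ
      rw [slope_def_field]
      have h1 : 0 < g τ u₁ := hbefore τ hτ u₁ hu₁norm
      have h3 : τ - t₁ < 0 := sub_neg.mpr hτ.2
      exact (div_neg_of_pos_of_neg (by rw [hg₁0]; linarith) h3).le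
    linarith
  -- conclusion
  have hf : ∀ u : Euc n, ‖u‖ = 1 → ⟪u, x₀⟫ + 2*δ ≤ supp n (F.K t) u := by
    intro u hu
    have h1 := hclaim t ⟨htt0, le_refl t⟩ u hu
    have h2 : b * (t - t₀) < δ := by
      calc b * (t - t₀) < b * (δ / b) :=
            mul_lt_mul_of_pos_left (by linarith) hbpos
        _ = δ := hδc
    simp only [hgdef, hrdef] at h1
    linarith
  have hbody := F.body t ⟨le_trans ht0T htt0, htltT⟩
  exact ball_subset_of_supp hbody.isCompact hbody.convex
    ⟨_, interior_subset hbody.nonempty_interior.choose_spec⟩ hf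

end
end

section
/- Let E be a finite-dimensional real inner product space and let K ⊆ E be a nonempty compact convex set with support function s_K(x) = sup_{y∈K}⟨x,y⟩. Suppose e is a unit vector at which the supremum of s_K over the unit sphere of E is attained. Then the point s_K(e)·e belongs to K, and consequently s_K(u) ≥ s_K(e)·⟨u,e⟩ for every vector u with |u| = 1. -/
/-! Let `y ∈ K` be a point where `⟪e, ·⟫` is maximal on `K`, so `s_K(e) = ⟪e, y⟫ ≤ ‖y‖`. Testing the
support function in the direction of `y` gives `‖y‖ ≤ s_K(y / ‖y‖) ≤ s_K(e)`, so Cauchy–Schwarz is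
an equality and `y = ‖y‖ e = s_K(e) e`. The inequality is then `⟪u, s_K(e) e⟫ ≤ s_K(u)`. -/

open scoped RealInnerProductSpace

noncomputable section

def supportFn {E : Type*} [NormedAddCommGroup E] [InnerProductSpace ℝ E]
    (K : Set E) (x : E) : ℝ :=
  sSup ((fun y => ⟪x, y⟫) '' K)

section SupportFn

variable {E : Type*} [NormedAddCommGroup E] [InnerProductSpace ℝ E] {K : Set E}

theorem bddAbove_inner_image (hK : Bornology.IsBounded K) (x : E) :
    BddAbove ((fun y => ⟪x, y⟫) '' K) := by
  obtain ⟨R, hR⟩ := hK.exists_norm_le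
  refine ⟨‖x‖ * R, ?_⟩
  rintro _ ⟨y, hy, rfl⟩
  exact (real_inner_le_norm x y).trans (by gcongr; exact hR y hy)

theorem inner_le_supportFn (hK : Bornology.IsBounded K) (x : E) {y : E} (hy : y ∈ K) :
    ⟪x, y⟫ ≤ supportFn K x :=
  le_csSup (bddAbove_inner_image hK x) ⟨y, hy, rfl⟩

theorem exists_mem_supportFn_eq_inner (hK : IsCompact K) (hne : K.Nonempty) (x : E) :
    ∃ y ∈ K, supportFn K x = ⟪x, y⟫ := by
  obtain ⟨y, hy, hmax⟩ :=
    hK.exists_isMaxOn hne (continuous_const.inner (𝕜 := ℝ) continuous_id).continuousOn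
  exact ⟨y, hy, IsGreatest.csSup_eq ⟨⟨y, hy, rfl⟩, by rintro _ ⟨z, hz, rfl⟩; exact hmax hz⟩⟩

theorem norm_le_supportFn_inv_norm_smul (hK : Bornology.IsBounded K) {y : E} (hy : y ∈ K) :
    ‖y‖ ≤ supportFn K (‖y‖⁻¹ • y) := by
  have hinner : ⟪‖y‖⁻¹ • y, y⟫ = ‖y‖ := by
    rw [real_inner_smul_left, real_inner_self_eq_norm_sq]
    rcases eq_or_ne ‖y‖ 0 with h | h
    · simp [h]
    · field_simp
  calc ‖y‖ = ⟪‖y‖⁻¹ • y, y⟫ := hinner.symm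
    _ ≤ supportFn K (‖y‖⁻¹ • y) := inner_le_supportFn hK _ hy

theorem supportFn_smul_mem_of_forall_supportFn_le (hK : IsCompact K) (hne : K.Nonempty) {e : E}
    (he : ‖e‖ = 1) (hmax : ∀ u : E, ‖u‖ = 1 → supportFn K u ≤ supportFn K e) :
    supportFn K e • e ∈ K := by
  obtain ⟨y, hy, hsy⟩ := exists_mem_supportFn_eq_inner hK hne e
  have hnorm : ⟪e, y⟫ = ‖y‖ := by
    rcases eq_or_ne y 0 with rfl | hy0
    · simp
    · have hunit : ‖‖y‖⁻¹ • y‖ = 1 := norm_smul_inv_norm hy0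
      have hle := (norm_le_supportFn_inv_norm_smul hK.isBounded hy).trans (hmax _ hunit)
      have hcs : ⟪e, y⟫ ≤ ‖y‖ := by simpa [he] using real_inner_le_norm e y
      linarith
  have hparallel : y = ‖y‖ • e := by
    have h := inner_eq_norm_mul_iff_real.mp (by rw [hnorm, he, one_mul] : ⟪e, y⟫ = ‖e‖ * ‖y‖)
    rwa [he, one_smul, eq_comm] at h
  rwa [hsy, hnorm, ← hparallel]

end SupportFn

theorem stmt16_general {E : Type*} [NormedAddCommGroup E] [InnerProductSpace ℝ E]
    (K : Set E) (hne : K.Nonempty) (hcpt : IsCompact K)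
    (e : E) (he : ‖e‖ = 1)
    (hmax : ∀ u : E, ‖u‖ = 1 → supportFn K u ≤ supportFn K e) :
    supportFn K e • e ∈ K ∧
    ∀ u : E, ‖u‖ = 1 → supportFn K e * ⟪u, e⟫ ≤ supportFn K u := by
  have hmem := supportFn_smul_mem_of_forall_supportFn_le hcpt hne he hmax
  refine ⟨hmem, fun u _ => ?_⟩
  simpa [real_inner_smul_right] using inner_le_supportFn hcpt.isBounded u hmem

/-- if `K` is a nonempty compact convex subset of a
finite-dimensional real inner product space and the supremum of its support function
over the unit sphere is attained at the unit vector `e`, then `s_K(e) • e ∈ K`, and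
consequently `s_K(u) ≥ s_K(e) ⟨u, e⟩` for every unit vector `u`. -/
theorem stmt16 {E : Type*} [NormedAddCommGroup E] [InnerProductSpace ℝ E]
    [FiniteDimensional ℝ E] (K : Set E) (hne : K.Nonempty) (hcpt : IsCompact K)
    (hconv : Convex ℝ K) (e : E) (he : ‖e‖ = 1)
    (hmax : ∀ u : E, ‖u‖ = 1 → supportFn K u ≤ supportFn K e) :
    supportFn K e • e ∈ K ∧
    ∀ u : E, ‖u‖ = 1 → supportFn K e * ⟪u, e⟫ ≤ supportFn K u :=
  stmt16_general K hne hcpt e he hmax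

end
end
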